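/- Let R be a commutative ring in which 2 is invertible, m ≥ 1, and suppose n = 2r and φ = [[0, I_r],[I_r, 0]] (the split hyperbolic Gram matrix), so that Φ = diag(φ, [[0,I_m],[I_m,0]]) is the permutation matrix of a fixed-point-free involution σ of {1, …, n+2m}. Let EO_{n+2m}(R) be the subgroup of O_R(q ⊥ h^m) generated by the usual elementary orthogonal matrices oe_{kl}(a) = I_{n+2m} + a·e_{kl} − a·e_{σ(l),σ(k)} for a ∈ R and indices k ≠ l with k ≠ σ(l). Then EO_R(q, h^m) = EO_{n+2m}(R). -/

import Mathlib

/-!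
Relax the x–f block of `E_α` to any `X` with `X + Xᵀ = -α φ⁻¹ αᵀ`; these matrices multiply by
`E(α, X) E(β, Y) = E(α + β, X + Y - α φ⁻¹ βᵀ)`. Splitting `α` into matrix units therefore writes
`E_α` as a product of `E(a e_pq, 0) = oe(x_p, z_q, a)` and of `E(0, S)` with `S` skew, and the
latter is a product of the `oe(x_i, f_j, a)`. Swapping the x- and f-blocks carries `E_β` to
`E*_β` and permutes the `oe`'s, so `EO_R(q, h^m) ⊆ EO_{n+2m}(R)`.

Conversely `oe(x_p, z_q, a) = E_{a e_pq}` and `oe(f_p, z_q, a) = E*_{a e_pq}`, the symmetry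
`oe_kl(a) = oe_{σl,σk}(-a)` gives the `oe(z, ·)` with a non-z second index, and every remaining
`oe_ik(a)` is the commutator of `oe_ij(a)` and `oe_jk(1)` for a suitable middle index `j`: an
x-index when `i, k` lie in the z-block, a z-index when neither does.
-/

namespace DSER9

open Matrix

variable {R : Type*} [CommRing R] [Invertible (2 : R)]

/-- Index of the z-block: `n = 2r` with the split hyperbolic Gram matrix. -/
abbrev ZInd (r : ℕ) := Fin r ⊕ Fin r

/-- Index type for `Q ⊥ h^m`: the `z`-block, then the `x`-block, then the `f`-block. -/
abbrev Ind (r m : ℕ) := ZInd r ⊕ (Fin m ⊕ Fin m)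

variable {r m : ℕ}

/-- The split hyperbolic Gram matrix `φ = [[0, I_r],[I_r, 0]]`. -/
def hphi (r : ℕ) : Matrix (ZInd r) (ZInd r) R := fromBlocks 0 1 1 0

instance : Invertible (hphi r : Matrix (ZInd r) (ZInd r) R) :=
  ⟨hphi r, by simp [hphi, fromBlocks_multiply, ← fromBlocks_one],
   by simp [hphi, fromBlocks_multiply, ← fromBlocks_one]⟩

/-- The Gram matrix `Φ = diag(φ, [[0, I_m],[I_m, 0]])` of `q ⊥ h^m`. -/
def Phi (φ : Matrix (ZInd r) (ZInd r) R) (m : ℕ) : Matrix (Ind r m) (Ind r m) R :=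
  fromBlocks φ 0 0 (fromBlocks 0 1 1 0)

/-- The elementary matrix `E_α = [[I_n, 0, −α*],[α, I_m, −(1/2)αα*],[0, 0, I_m]]`,
where `α* = φ⁻¹αᵀ`. -/
def Emat (φ : Matrix (ZInd r) (ZInd r) R) [Invertible φ] (α : Matrix (Fin m) (ZInd r) R) :
    Matrix (Ind r m) (Ind r m) R :=
  fromBlocks 1 (fromCols 0 (-(⅟φ * αᵀ))) (fromRows α 0)
    (fromBlocks 1 (-((⅟(2:R)) • (α * (⅟φ * αᵀ)))) 0 1)

/-- The elementary matrix `E*_β = [[I_n, −β*, 0],[0, I_m, 0],[β, −(1/2)ββ*, I_m]]`,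
where `β* = φ⁻¹βᵀ`. -/
def EmatStar (φ : Matrix (ZInd r) (ZInd r) R) [Invertible φ] (β : Matrix (Fin m) (ZInd r) R) :
    Matrix (Ind r m) (Ind r m) R :=
  fromBlocks 1 (fromCols (-(⅟φ * βᵀ)) 0) (fromRows 0 β)
    (fromBlocks 1 0 (-((⅟(2:R)) • (β * (⅟φ * βᵀ)))) 1)

/-- The set of elementary generators `E_α`, `E*_β` inside the unit group. -/
def ElemSet (φ : Matrix (ZInd r) (ZInd r) R) [Invertible φ] (m : ℕ) :
    Set (Matrix (Ind r m) (Ind r m) R)ˣ :=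
  {g | ∃ α : Matrix (Fin m) (ZInd r) R,
    (g : Matrix (Ind r m) (Ind r m) R) = Emat φ α ∨
    (g : Matrix (Ind r m) (Ind r m) R) = EmatStar φ α}

/-- The DSER elementary orthogonal group `EO_R(q, h^m)`. -/
def EOGrp (φ : Matrix (ZInd r) (ZInd r) R) [Invertible φ] (m : ℕ) :
    Subgroup (Matrix (Ind r m) (Ind r m) R)ˣ :=
  Subgroup.closure (ElemSet φ m)

/-- The fixed-point-free involution `σ` of the index set whose permutation matrix is `Φ`. -/
def sigma (r m : ℕ) : Ind r m → Ind r m := Sum.map Sum.swap Sum.swap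

/-- The usual elementary orthogonal matrix `oe_{kl}(a) = I + a e_{kl} − a e_{σ(l) σ(k)}`. -/
def oe (k l : Ind r m) (a : R) : Matrix (Ind r m) (Ind r m) R :=
  1 + single k l a - single (sigma r m l) (sigma r m k) a

/-- The usual elementary orthogonal group `EO_{n+2m}(R)` for the split form `Φ`. -/
def EOusual (r m : ℕ) : Subgroup (Matrix (Ind r m) (Ind r m) R)ˣ :=
  Subgroup.closure
    {g | ∃ (k l : Ind r m) (a : R), k ≠ l ∧ k ≠ sigma r m l ∧
      (g : Matrix (Ind r m) (Ind r m) R) = oe k l a}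

end DSER9

namespace DSER9

open Matrix

theorem one_add_mul_one_add_mul_one_sub_mul_one_sub {S : Type*} [Ring S] {A B : S}
    (hA : A * A = 0) (hB : B * B = 0) (hABA : A * B * A = 0) (hBAB : B * A * B = 0) :
    (1 + A) * (1 + B) * (1 - A) * (1 - B) = 1 + (A * B - B * A) := by
  have expand : (1 + A) * (1 + B) * (1 - A) * (1 - B) = 1 + (A * B - B * A)
      - A * A + A * A * B - B * B - A * (B * B) + B * A * B - A * B * A + A * B * A * B := by
    noncomm_ring
  rw [expand, hA, hB, hABA, hBAB]
  simp

section Sigma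

variable {r m : ℕ}

@[simp]
theorem sigma_inl (q : ZInd r) : sigma r m (Sum.inl q) = Sum.inl q.swap := rfl

@[simp]
theorem sigma_inr (p : Fin m ⊕ Fin m) : sigma r m (Sum.inr p) = Sum.inr p.swap := rfl

@[simp]
theorem sigma_sigma (k : Ind r m) : sigma r m (sigma r m k) = k := by
  rcases k with q | p <;> simp

theorem sigma_injective : Function.Injective (sigma r m) :=
  Function.LeftInverse.injective sigma_sigma

@[simp]
theorem sigma_inj {k l : Ind r m} : sigma r m k = sigma r m l ↔ k = l :=
  sigma_injective.eq_iff

theorem sigma_ne_self (k : Ind r m) : sigma r m k ≠ k := by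
  rcases k with (q | q) | (p | p) <;> simp

end Sigma

section Oe

variable {R : Type*} [CommRing R] {r m : ℕ}

theorem oe_eq_one_add (k l : Ind r m) (a : R) :
    oe k l a = 1 + (single k l a - single (sigma r m l) (sigma r m k) a) :=
  add_sub_assoc _ _ _

theorem oe_neg_eq_one_sub (k l : Ind r m) (a : R) :
    oe k l (-a) = 1 - (single k l a - single (sigma r m l) (sigma r m k) a) := by
  rw [oe, ← single_neg, ← single_neg]
  abel

theorem oe_sigma (k l : Ind r m) (a : R) :
    oe (sigma r m l) (sigma r m k) (-a) = oe k l a := by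
  simp only [oe, sigma_sigma, ← single_neg]
  abel

theorem single_sub_single_mul_self_eq_zero (k l : Ind r m) (hkl : k ≠ l) (a : R) :
    (single k l a - single (sigma r m l) (sigma r m k) a) *
      (single k l a - single (sigma r m l) (sigma r m k) a) = 0 := by
  simp [sub_mul, mul_sub, hkl, hkl.symm, sigma_ne_self, (sigma_ne_self _).symm]

theorem isUnit_oe {k l : Ind r m} (hkl : k ≠ l) (a : R) : IsUnit (oe k l a) := by
  rw [oe_eq_one_add]
  exact IsNilpotent.isUnit_one_add ⟨2, by rw [pow_two, single_sub_single_mul_self_eq_zero k l hkl]⟩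

theorem oe_commutator {i j k : Ind r m} (hij : i ≠ j) (hjk : j ≠ k) (hik : i ≠ k)
    (hjσi : j ≠ sigma r m i) (hjσk : j ≠ sigma r m k) (a b : R) :
    oe i j a * oe j k b * oe i j (-a) * oe j k (-b) = oe i k (a * b) := by
  have hkσj : k ≠ sigma r m j := fun h => hjσk (by rw [h, sigma_sigma])
  have hiσj : i ≠ sigma r m j := fun h => hjσi (by rw [h, sigma_sigma])
  set A := single i j a - single (sigma r m j) (sigma r m i) a with hA
  set B := single j k b - single (sigma r m k) (sigma r m j) b with hB
  have hAB : A * B = single i k (a * b) := by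
    simp [hA, hB, sub_mul, mul_sub, hjσk, hjσi.symm, hik]
  have hBA : B * A = single (sigma r m k) (sigma r m i) (a * b) := by
    simp [hA, hB, sub_mul, mul_sub, hkσj, hiσj.symm, hik.symm, mul_comm]
  have hABA : A * B * A = 0 := by
    rw [hAB, hA]
    simp [mul_sub, hik.symm, hkσj]
  have hBAB : B * A * B = 0 := by
    rw [hBA, hB]
    simp [mul_sub, hjσi.symm, hik]
  rw [oe_eq_one_add, oe_eq_one_add, oe_neg_eq_one_sub, oe_neg_eq_one_sub,
    one_add_mul_one_add_mul_one_sub_mul_one_sub (single_sub_single_mul_self_eq_zero i j hij a)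
      (single_sub_single_mul_self_eq_zero j k hjk b) hABA hBAB, hAB, hBA, oe_eq_one_add]

theorem oe_mem_of_commutator {N : Submonoid (Matrix (Ind r m) (Ind r m) R)} {i j k : Ind r m}
    (hij : i ≠ j) (hjk : j ≠ k) (hik : i ≠ k) (hjσi : j ≠ sigma r m i) (hjσk : j ≠ sigma r m k)
    (h₁ : ∀ a, oe i j a ∈ N) (h₂ : ∀ b, oe j k b ∈ N) (a : R) : oe i k a ∈ N := by
  rw [← mul_one a, ← oe_commutator hij hjk hik hjσi hjσk a 1]
  exact mul_mem (mul_mem (mul_mem (h₁ a) (h₂ 1)) (h₁ (-a))) (h₂ (-1))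

end Oe

section EmatX

variable {R : Type*} [CommRing R] {r m : ℕ}

def EmatX (ψ : Matrix (ZInd r) (ZInd r) R) (α : Matrix (Fin m) (ZInd r) R)
    (X : Matrix (Fin m) (Fin m) R) : Matrix (Ind r m) (Ind r m) R :=
  fromBlocks 1 (fromCols 0 (-(ψ * αᵀ))) (fromRows α 0) (fromBlocks 1 X 0 1)

theorem Emat_eq_EmatX (φ : Matrix (ZInd r) (ZInd r) R) [Invertible φ] [Invertible (2 : R)]
    (α : Matrix (Fin m) (ZInd r) R) :
    Emat φ α = EmatX (⅟φ) α (-(⅟(2 : R) • (α * (⅟φ * αᵀ)))) :=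
  rfl

variable (ψ : Matrix (ZInd r) (ZInd r) R)

theorem EmatX_mul (α β : Matrix (Fin m) (ZInd r) R) (X Y : Matrix (Fin m) (Fin m) R) :
    EmatX ψ α X * EmatX ψ β Y = EmatX ψ (α + β) (X + Y - α * (ψ * βᵀ)) := by
  simp only [EmatX, fromBlocks_multiply, fromCols_mul_fromRows, fromCols_mul_fromBlocks,
    fromBlocks_mul_fromRows, fromRows_mul_fromCols]
  simp only [Matrix.mul_one, Matrix.one_mul, Matrix.mul_zero, Matrix.zero_mul, add_zero, zero_add,
    fromBlocks_add, fromBlocks_inj, true_and, and_true]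
  refine ⟨?_, ?_, ?_⟩
  · ext i (j | j) <;> simp [Matrix.mul_add, add_comm]
  · ext (i | i) j <;> simp
  · rw [Matrix.mul_neg, sub_eq_add_neg, add_comm X Y, add_comm]

theorem EmatX_zero_zero : EmatX ψ 0 0 = (1 : Matrix (Ind r m) (Ind r m) R) := by
  simp [EmatX, ← fromBlocks_one]

theorem isUnit_EmatX (α : Matrix (Fin m) (ZInd r) R) (X : Matrix (Fin m) (Fin m) R) :
    IsUnit (EmatX ψ α X) := by
  refine ⟨⟨EmatX ψ α X, EmatX ψ (-α) (-X - α * (ψ * αᵀ)), ?_, ?_⟩, rfl⟩ <;>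
    rw [EmatX_mul, ← EmatX_zero_zero ψ] <;> congr 1 <;> simp <;> abel

theorem EmatX_zero_add (X Y : Matrix (Fin m) (Fin m) R) :
    EmatX ψ (0 : Matrix (Fin m) (ZInd r) R) (X + Y) = EmatX ψ 0 X * EmatX ψ 0 Y := by
  simp [EmatX_mul]

end EmatX

section Membership

variable {R : Type*} [CommRing R] {r m : ℕ}
variable (ψ : Matrix (ZInd r) (ZInd r) R) {N : Submonoid (Matrix (Ind r m) (Ind r m) R)}

theorem EmatX_zero_sub_transpose_mem
    (hskew : ∀ i j (a : R), EmatX ψ 0 (single i j a - single j i a) ∈ N)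
    (C : Matrix (Fin m) (Fin m) R) : EmatX ψ 0 (C - Cᵀ) ∈ N := by
  induction C using Matrix.induction_on' with
  | h_zero => simp [EmatX_zero_zero, N.one_mem]
  | h_add C D hC hD =>
    rw [transpose_add, add_sub_add_comm, EmatX_zero_add]
    exact mul_mem hC hD
  | h_std_basis i j a => simpa using hskew i j a

theorem single_mul_mul_transpose_single {ψ : Matrix (ZInd r) (ZInd r) R} (hdiag : ∀ q, ψ q q = 0)
    (p : Fin m) (q : ZInd r) (a : R) : single p q a * (ψ * (single p q a)ᵀ) = 0 := by
  rw [transpose_single, ← Matrix.mul_assoc, single_mul_mul_single, hdiag, mul_zero, zero_mul,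
    single_zero]

variable [Invertible (2 : R)]

theorem EmatX_zero_mem_of_transpose_eq_neg
    (hskew : ∀ i j (a : R), EmatX ψ 0 (single i j a - single j i a) ∈ N)
    {S : Matrix (Fin m) (Fin m) R} (hS : Sᵀ = -S) : EmatX ψ 0 S ∈ N := by
  have half : S = ⅟(2 : R) • S - (⅟(2 : R) • S)ᵀ := by
    rw [transpose_smul, hS, smul_neg, sub_neg_eq_add, ← add_smul, invOf_two_add_invOf_two,
      one_smul]
  rw [half]
  exact EmatX_zero_sub_transpose_mem ψ hskew _

variable {ψ}

theorem neg_half_smul_add_transpose (hψ : ψᵀ = ψ) (α : Matrix (Fin m) (ZInd r) R) :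
    -(⅟(2 : R) • (α * (ψ * αᵀ))) + (-(⅟(2 : R) • (α * (ψ * αᵀ))))ᵀ = -(α * (ψ * αᵀ)) := by
  rw [transpose_neg, transpose_smul, transpose_mul, transpose_mul, transpose_transpose, hψ,
    Matrix.mul_assoc, ← neg_add, ← add_smul, invOf_two_add_invOf_two, one_smul]

theorem EmatX_mem (hψ : ψᵀ = ψ) (hdiag : ∀ q, ψ q q = 0)
    (hsingle : ∀ p q (a : R), EmatX ψ (single p q a) 0 ∈ N)
    (hskew : ∀ i j (a : R), EmatX ψ 0 (single i j a - single j i a) ∈ N)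
    (α : Matrix (Fin m) (ZInd r) R) {X : Matrix (Fin m) (Fin m) R}
    (hX : X + Xᵀ = -(α * (ψ * αᵀ))) : EmatX ψ α X ∈ N := by
  induction α using Matrix.induction_on' generalizing X with
  | h_zero =>
    refine EmatX_zero_mem_of_transpose_eq_neg ψ hskew ?_
    simpa [eq_neg_iff_add_eq_zero, add_comm] using hX
  | h_add α β hα hβ =>
    obtain ⟨X₁, hX₁⟩ : ∃ X₁, X₁ + X₁ᵀ = -(α * (ψ * αᵀ)) := ⟨_, neg_half_smul_add_transpose hψ α⟩
    obtain ⟨X₂, hX₂⟩ : ∃ X₂, X₂ + X₂ᵀ = -(β * (ψ * βᵀ)) := ⟨_, neg_half_smul_add_transpose hψ β⟩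
    have split : EmatX ψ (α + β) X =
        EmatX ψ α X₁ * EmatX ψ β X₂ * EmatX ψ 0 (X - X₁ - X₂ + α * (ψ * βᵀ)) := by
      rw [EmatX_mul, EmatX_mul, add_zero]
      congr 1
      simp
    rw [split]
    refine mul_mem (mul_mem (hα hX₁) (hβ hX₂)) (EmatX_zero_mem_of_transpose_eq_neg ψ hskew ?_)
    simp only [transpose_add, transpose_sub, transpose_mul, transpose_transpose, hψ,
      eq_sub_of_add_eq' hX, eq_sub_of_add_eq' hX₁, eq_sub_of_add_eq' hX₂, Matrix.mul_add,
      Matrix.add_mul, Matrix.mul_assoc]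
    abel
  | h_std_basis p q a =>
    have split : EmatX ψ (single p q a) X = EmatX ψ (single p q a) 0 * EmatX ψ 0 X := by
      rw [EmatX_mul]
      simp
    rw [split]
    refine mul_mem (hsingle p q a) (EmatX_zero_mem_of_transpose_eq_neg ψ hskew ?_)
    rw [single_mul_mul_transpose_single hdiag] at hX
    simpa [eq_neg_iff_add_eq_zero, add_comm] using hX

end Membership

section Hyperbolic

variable {R : Type*} [CommRing R] {r m : ℕ}

theorem hphi_transpose : (hphi r : Matrix (ZInd r) (ZInd r) R)ᵀ = hphi r := by
  simp [hphi, fromBlocks_transpose]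

theorem invOf_hphi [Invertible (2 : R)] : ⅟(hphi r : Matrix (ZInd r) (ZInd r) R) = hphi r :=
  rfl

@[simp]
theorem hphi_apply_self (q : ZInd r) : (hphi r : Matrix (ZInd r) (ZInd r) R) q q = 0 := by
  rcases q with q | q <;> simp [hphi]

theorem hphi_mul_single {ι : Type*} [DecidableEq ι] (q : ZInd r) (p : ι) (a : R) :
    (hphi r : Matrix (ZInd r) (ZInd r) R) * single q p a = single q.swap p a := by
  ext i j
  rcases eq_or_ne p j with rfl | hpj
  · rcases q with q | q <;> rcases i with i | i <;>
      simp [hphi, Matrix.mul_apply, single, one_apply, eq_comm]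
  · simp [Matrix.mul_apply, single, hpj]

theorem EmatX_hphi_single (p : Fin m) (q : ZInd r) (a : R) :
    EmatX (hphi r) (single p q a) 0 = oe (Sum.inr (Sum.inl p)) (Sum.inl q) a := by
  rw [EmatX, transpose_single, hphi_mul_single]
  ext (i | i | i) (j | j | j) <;>
    simp [oe, one_apply, single, fromBlocks]

theorem EmatX_hphi_single_sub_single (i j : Fin m) (a : R) :
    EmatX (hphi r) 0 (single i j a - single j i a) =
      oe (Sum.inr (Sum.inl i)) (Sum.inr (Sum.inr j)) a := by
  ext (s | s | s) (t | t | t) <;>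
    simp [EmatX, oe, one_apply, single, fromBlocks]

end Hyperbolic

section SwapXF

variable {R : Type*} [CommRing R] {r m : ℕ}

def swapXF : Ind r m ≃ Ind r m := Equiv.sumCongr (Equiv.refl _) (Equiv.sumComm _ _)

@[simp]
theorem swapXF_symm : (swapXF : Ind r m ≃ Ind r m).symm = swapXF := rfl

theorem sigma_swapXF (k : Ind r m) : sigma r m (swapXF k) = swapXF (sigma r m k) := by
  rcases k with q | p | p <;> rfl

theorem reindex_swapXF_oe (k l : Ind r m) (a : R) :
    reindex swapXF swapXF (oe k l a) = oe (swapXF k) (swapXF l) a := by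
  simp [oe, reindex_apply, submatrix_add, submatrix_sub, sigma_swapXF]

theorem reindex_swapXF_Emat (φ : Matrix (ZInd r) (ZInd r) R) [Invertible φ] [Invertible (2 : R)]
    (α : Matrix (Fin m) (ZInd r) R) :
    reindex swapXF swapXF (Emat φ α) = EmatStar φ α := by
  ext (i | i | i) (j | j | j) <;> simp [Emat, EmatStar, swapXF, fromBlocks]

end SwapXF

section Usual

variable {R : Type*} [CommRing R] {r m : ℕ}

theorem oe_sigma_self (l : Ind r m) (a : R) : oe (sigma r m l) l a = 1 := by
  simp [oe]

theorem oe_mem_EOusual {k l : Ind r m} (hkl : k ≠ l) (a : R) :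
    oe k l a ∈ (EOusual (R := R) r m).ofUnits := by
  by_cases hks : k = sigma r m l
  · rw [hks, oe_sigma_self]
    exact Submonoid.one_mem _
  · exact Subgroup.mem_ofUnits _
      (Subgroup.subset_closure ⟨k, l, a, hkl, hks, (isUnit_oe hkl a).unit_spec⟩)
      (isUnit_oe hkl a).unit_spec

theorem EOusual_le_comap_swapXF :
    (EOusual (R := R) r m) ≤
      (EOusual r m).comap (Units.map (reindexAlgEquiv R R swapXF).toMonoidHom) := by
  refine (Subgroup.closure_le _).2 ?_
  rintro g ⟨k, l, a, hkl, hks, hg⟩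
  refine Subgroup.subset_closure ⟨swapXF k, swapXF l, a, swapXF.injective.ne hkl, ?_, ?_⟩
  · rw [sigma_swapXF]
    exact swapXF.injective.ne hks
  · simpa [hg] using reindex_swapXF_oe k l a

theorem reindex_swapXF_mem_EOusual {M : Matrix (Ind r m) (Ind r m) R}
    (hM : M ∈ (EOusual (R := R) r m).ofUnits) :
    reindex swapXF swapXF M ∈ (EOusual (R := R) r m).ofUnits := by
  obtain ⟨u, hu, rfl⟩ := hM
  exact ⟨_, EOusual_le_comap_swapXF hu, rfl⟩

variable [Invertible (2 : R)]

theorem Emat_mem_EOusual (α : Matrix (Fin m) (ZInd r) R) :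
    Emat (hphi r) α ∈ (EOusual (R := R) r m).ofUnits :=
  EmatX_mem hphi_transpose hphi_apply_self
    (fun p q a => EmatX_hphi_single p q a ▸ oe_mem_EOusual (by simp) a)
    (fun i j a => EmatX_hphi_single_sub_single i j a ▸ oe_mem_EOusual (by simp) a)
    α (neg_half_smul_add_transpose hphi_transpose α)

theorem EmatStar_mem_EOusual (α : Matrix (Fin m) (ZInd r) R) :
    EmatStar (hphi r) α ∈ (EOusual (R := R) r m).ofUnits :=
  reindex_swapXF_Emat (hphi r) α ▸ reindex_swapXF_mem_EOusual (Emat_mem_EOusual α)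

end Usual

section DSER

variable {R : Type*} [CommRing R] [Invertible (2 : R)] {r m : ℕ}

theorem Emat_mem_EOGrp (φ : Matrix (ZInd r) (ZInd r) R) [Invertible φ]
    (α : Matrix (Fin m) (ZInd r) R) : Emat φ α ∈ (EOGrp φ m).ofUnits :=
  have hu := isUnit_EmatX (⅟φ) α (-(⅟(2 : R) • (α * (⅟φ * αᵀ))))
  Subgroup.mem_ofUnits _ (Subgroup.subset_closure ⟨α, Or.inl hu.unit_spec⟩) hu.unit_spec

theorem EmatStar_mem_EOGrp (φ : Matrix (ZInd r) (ZInd r) R) [Invertible φ]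
    (α : Matrix (Fin m) (ZInd r) R) : EmatStar φ α ∈ (EOGrp φ m).ofUnits :=
  have hu : IsUnit (EmatStar φ α) := reindex_swapXF_Emat φ α ▸
    (isUnit_EmatX (⅟φ) α (-(⅟(2 : R) • (α * (⅟φ * αᵀ))))).map (reindexAlgEquiv R R swapXF)
  Subgroup.mem_ofUnits _ (Subgroup.subset_closure ⟨α, Or.inr hu.unit_spec⟩) hu.unit_spec

theorem Emat_hphi_single (p : Fin m) (q : ZInd r) (a : R) :
    Emat (hphi r) (single p q a) = oe (Sum.inr (Sum.inl p)) (Sum.inl q) a := by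
  rw [Emat_eq_EmatX, invOf_hphi, single_mul_mul_transpose_single hphi_apply_self, smul_zero,
    neg_zero, EmatX_hphi_single]

theorem EmatStar_hphi_single (p : Fin m) (q : ZInd r) (a : R) :
    EmatStar (hphi r) (single p q a) = oe (Sum.inr (Sum.inr p)) (Sum.inl q) a := by
  rw [← reindex_swapXF_Emat, Emat_hphi_single, reindex_swapXF_oe]
  rfl

theorem oe_inr_inl_mem_EOGrp (p : Fin m ⊕ Fin m) (q : ZInd r) (a : R) :
    oe (Sum.inr p) (Sum.inl q) a ∈ (EOGrp (hphi r) m).ofUnits := by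
  rcases p with p | p
  · exact Emat_hphi_single p q a ▸ Emat_mem_EOGrp _ _
  · exact EmatStar_hphi_single p q a ▸ EmatStar_mem_EOGrp _ _

theorem oe_inl_inr_mem_EOGrp (q : ZInd r) (p : Fin m ⊕ Fin m) (a : R) :
    oe (Sum.inl q) (Sum.inr p) a ∈ (EOGrp (hphi r) m).ofUnits := by
  rw [← oe_sigma]
  exact oe_inr_inl_mem_EOGrp _ _ _

theorem oe_mem_EOGrp (hr : 1 ≤ r) (hm : 1 ≤ m) {k l : Ind r m} (hkl : k ≠ l) (a : R) :
    oe k l a ∈ (EOGrp (hphi r) m).ofUnits := by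
  rcases k with k | k <;> rcases l with l | l
  · exact oe_mem_of_commutator (j := Sum.inr (Sum.inl ⟨0, hm⟩)) (by simp) (by simp) hkl
      (by simp) (by simp) (oe_inl_inr_mem_EOGrp k _) (oe_inr_inl_mem_EOGrp _ l) a
  · exact oe_inl_inr_mem_EOGrp k l a
  · exact oe_inr_inl_mem_EOGrp k l a
  · exact oe_mem_of_commutator (j := Sum.inl (Sum.inl ⟨0, hr⟩)) (by simp) (by simp) hkl
      (by simp) (by simp) (oe_inr_inl_mem_EOGrp k _) (oe_inl_inr_mem_EOGrp _ l) a

end DSER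

end DSER9

open DSER9 in
/-- For the split hyperbolic form on the z-block, the DSER elementary
orthogonal group coincides with the usual elementary orthogonal group `EO_{n+2m}(R)`. -/
theorem dser_EO_eq_usual_EO
    (R : Type*) [CommRing R] [Invertible (2 : R)]
    (r : ℕ) (hr : 1 ≤ r) (m : ℕ) (hm : 1 ≤ m) :
    EOGrp (R := R) (hphi r) m = EOusual r m := by
  apply le_antisymm
  · refine (Subgroup.closure_le _).2 ?_
    rintro g ⟨α, hg | hg⟩ <;> refine Subgroup.mem_of_mem_val_ofUnits _ ?_ <;> rw [hg]
    · exact Emat_mem_EOusual α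
    · exact EmatStar_mem_EOusual α
  · refine (Subgroup.closure_le _).2 ?_
    rintro g ⟨k, l, a, hkl, -, hg⟩
    exact Subgroup.mem_of_mem_val_ofUnits _ (hg ▸ oe_mem_EOGrp hr hm hkl a)
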